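/- Let p be a prime and K a commutative ring of characteristic p. For 0 ≤ k ≤ p−1 and series A, B ∈ K[[X]], define C_{k,1} = Σ_{n≥0} γ_{k+np} Xⁿ for C = Σ γₙXⁿ. Then (A ⧢ B)_{k,1} = Σ_{i=0}^{k} C(k,i) · (A_{i,1} ⧢ B_{k−i,1}). -/

import Mathlib

open PowerSeries

/-- The shuffle product of formal power series. -/
noncomputable def shuffle {K : Type*} [CommRing K] (A B : PowerSeries K) : PowerSeries K :=
  PowerSeries.mk fun n => ∑ k ∈ Finset.range (n + 1),
    (n.choose k : K) * (coeff k A) * (coeff (n - k) B)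

/-- The section `C_{k,1} = Σ_{n≥0} γ_{k+np} Xⁿ` of `C = Σ γₙXⁿ`. -/
noncomputable def sect {K : Type*} [CommRing K] (p k : ℕ) (C : PowerSeries K) : PowerSeries K :=
  PowerSeries.mk fun n => coeff (k + n * p) C

/-! Writing the summation index of the `(k + n p)`-th coefficient of `A ⧢ B` as `i + m p` with
`i < p`, Lucas's theorem gives `C(k + n p, i + m p) ≡ C(k, i) · C(n, m) (mod p)`. The terms with
`i > k` therefore vanish, and the rest regroup into the `n`-th coefficients of the products
`A_{i,1} ⧢ B_{k−i,1}`. -/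

open Finset

theorem Finset.sum_range_mul_eq_sum_sum {M : Type*} [AddCommMonoid M] (f : ℕ → M) (n p : ℕ) :
    ∑ j ∈ range (n * p), f j = ∑ m ∈ range n, ∑ i ∈ range p, f (i + m * p) := by
  induction n with
  | zero => simp
  | succ n ih => rw [add_mul, one_mul, sum_range_add, ih, sum_range_succ]; simp_rw [add_comm]

theorem Nat.cast_choose_add_mul_add_mul (K : Type*) [CommRing K] {p : ℕ} [Fact p.Prime]
    [CharP K p] {k i : ℕ} (hk : k < p) (hi : i < p) (n m : ℕ) :
    ((k + n * p).choose (i + m * p) : K) = k.choose i * n.choose m := by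
  have hp := (Fact.out : p.Prime).pos
  have h := Choose.choose_modEq_choose_mod_mul_choose_div_nat
    (p := p) (n := k + n * p) (k := i + m * p)
  simp only [Nat.add_mul_mod_self_right, Nat.add_mul_div_right _ _ hp, Nat.mod_eq_of_lt hk,
    Nat.mod_eq_of_lt hi, Nat.div_eq_of_lt hk, Nat.div_eq_of_lt hi, zero_add] at h
  exact_mod_cast (CharP.natCast_eq_natCast' K p h)

theorem coeff_shuffle {K : Type*} [CommRing K] (A B : PowerSeries K) (n : ℕ) :
    coeff n (shuffle A B) = ∑ j ∈ range (n + 1), (n.choose j : K) * coeff j A * coeff (n - j) B :=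
  coeff_mk _ _

theorem coeff_sect {K : Type*} [CommRing K] (p k : ℕ) (C : PowerSeries K) (n : ℕ) :
    coeff n (sect p k C) = coeff (k + n * p) C :=
  coeff_mk _ _

theorem coeff_shuffle_add_mul {K : Type*} [CommRing K] {p : ℕ} [Fact p.Prime] [CharP K p]
    {k : ℕ} (hk : k < p) (A B : PowerSeries K) (n : ℕ) :
    coeff (k + n * p) (shuffle A B) = ∑ i ∈ range (k + 1), ∑ m ∈ range (n + 1),
      (k.choose i : K) * n.choose m * coeff (i + m * p) A * coeff (k - i + (n - m) * p) B := by
  let t : ℕ → K := fun j => ((k + n * p).choose j : K) * coeff j A * coeff (k + n * p - j) B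
  calc coeff (k + n * p) (shuffle A B) = ∑ j ∈ range ((n + 1) * p), t j := by
        rw [coeff_shuffle]
        refine sum_subset (range_subset_range.2 (by nlinarith)) fun j _ hj => ?_
        simp [Nat.choose_eq_zero_of_lt (by simpa using hj : k + n * p < j)]
    _ = ∑ m ∈ range (n + 1), ∑ i ∈ range p, t (i + m * p) := sum_range_mul_eq_sum_sum t _ _
    _ = ∑ m ∈ range (n + 1), ∑ i ∈ range (k + 1), t (i + m * p) := by
        refine sum_congr rfl fun m _ => (sum_subset (range_subset_range.2 hk) fun i hi hik => ?_).symm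
        simp [t, Nat.cast_choose_add_mul_add_mul K hk (mem_range.1 hi),
          Nat.choose_eq_zero_of_lt (by simpa using hik : k < i)]
    _ = _ := by
        rw [sum_comm]
        refine sum_congr rfl fun i hi => sum_congr rfl fun m hm => ?_
        have hi := mem_range_succ_iff.1 hi
        have hm := Nat.mul_le_mul_right p (mem_range_succ_iff.1 hm)
        have hsub : k + n * p - (i + m * p) = k - i + (n - m) * p := by rw [Nat.sub_mul]; omega
        simp only [t, Nat.cast_choose_add_mul_add_mul K hk (hi.trans_lt hk), hsub]

/-- Over a commutative ring of prime characteristic `p`, for `0 ≤ k ≤ p − 1`,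
`(A ⧢ B)_{k,1} = Σ_{i=0}^{k} C(k,i) · (A_{i,1} ⧢ B_{k−i,1})`. -/
theorem sect_shuffle {K : Type*} [CommRing K] (p : ℕ) [hp : Fact p.Prime] [CharP K p]
    (k : ℕ) (hk : k ≤ p - 1) (A B : PowerSeries K) :
    sect p k (shuffle A B) =
      ∑ i ∈ Finset.range (k + 1),
        (k.choose i : K) • shuffle (sect p i A) (sect p (k - i) B) := by
  have hkp : k < p := by have := hp.out.pos; omega
  ext n
  simp only [coeff_sect, coeff_shuffle_add_mul hkp, map_sum, coeff_smul, coeff_shuffle,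
    smul_eq_mul, mul_sum]
  refine sum_congr rfl fun i _ => sum_congr rfl fun m _ => ?_
  ring
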